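/- Let K be a nonempty compact topological space and let ξ: K × [0, T] → ℝ be continuous, with the partial derivative ∂ₜξ existing and jointly continuous on K × [0, T). Define η(t) = max_{x ∈ K} ξ(x, t) and S(t) = {x ∈ K : ξ(x, t) = η(t)}. Then for every t ∈ [0, T), the upper right Dini derivative limsup_{τ→0⁺} (η(t+τ) − η(t))/τ is at most sup_{x ∈ S(t)} ∂ₜξ(x, t). -/
import Mathlib

open Set Filter Topology

/-- One-sided mean value inequality on a closed interval. -/
lemma mvt_aux {f f' : ℝ → ℝ} {a b B : ℝ} (hab : a ≤ b)
    (hf : ∀ s ∈ Set.Icc a b, HasDerivWithinAt f (f' s) (Set.Icc a b) s)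
    (hB : ∀ s ∈ Set.Ioo a b, f' s ≤ B) :
    f b - f a ≤ B * (b - a) := by
  have hcont : ContinuousOn f (Set.Icc a b) := fun s hs => (hf s hs).continuousWithinAt
  have hg : MonotoneOn (fun s => B * s - f s) (Set.Icc a b) := by
    refine monotoneOn_of_hasDerivWithinAt_nonneg (f' := fun s => B - f' s) (convex_Icc a b)
      ((Continuous.continuousOn (by continuity : Continuous fun s : ℝ => B * s)).sub hcont)
      ?_ ?_
    · simp only [interior_Icc]
      intro s hs
      have h1 : HasDerivWithinAt (fun u : ℝ => B * u) B (Set.Ioo a b) s := by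
        simpa using ((hasDerivAt_id s).const_mul B).hasDerivWithinAt
      exact h1.sub ((hf s (Set.Ioo_subset_Icc_self hs)).mono Set.Ioo_subset_Icc_self)
    · simp only [interior_Icc]
      intro s hs
      exact sub_nonneg.mpr (hB s hs)
  have := hg (Set.left_mem_Icc.mpr hab) (Set.right_mem_Icc.mpr hab) hab
  simp only at this
  linarith

theorem stmt_13 {K : Type*} [TopologicalSpace K] [CompactSpace K] [Nonempty K]
    (T : ℝ) (hT : 0 < T) (ξ ξt : K → ℝ → ℝ)
    (hcont : ContinuousOn (fun p : K × ℝ => ξ p.1 p.2) (Set.univ ×ˢ Set.Icc 0 T))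
    (hder : ∀ x : K, ∀ t ∈ Set.Ico (0 : ℝ) T,
      HasDerivWithinAt (ξ x) (ξt x t) (Set.Icc 0 T) t)
    (hcont' : ContinuousOn (fun p : K × ℝ => ξt p.1 p.2) (Set.univ ×ˢ Set.Ico 0 T)) :
    ∀ t ∈ Set.Ico (0 : ℝ) T,
      Filter.limsup
          (fun τ : ℝ => ((⨆ x : K, ξ x (t + τ)) - ⨆ x : K, ξ x t) / τ)
          (nhdsWithin 0 (Set.Ioi 0))
        ≤ sSup ((fun x : K => ξt x t) '' {x : K | ξ x t = ⨆ y : K, ξ y t}) := by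
  rintro t ⟨ht0, htT⟩
  -- continuity of the time slices
  have hxc : ∀ s ∈ Set.Icc (0:ℝ) T, Continuous fun x : K => ξ x s := by
    intro s hs
    exact hcont.comp_continuous (continuous_id.prodMk continuous_const)
      (fun x => ⟨trivial, hs⟩)
  have hxc' : Continuous fun x : K => ξt x t :=
    hcont'.comp_continuous (continuous_id.prodMk continuous_const)
      (fun x => ⟨trivial, ht0, htT⟩)
  have hbdd : ∀ s ∈ Set.Icc (0:ℝ) T, BddAbove (Set.range fun x : K => ξ x s) :=
    fun s hs => (isCompact_range (hxc s hs)).bddAbove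
  have htmem : t ∈ Set.Icc (0:ℝ) T := ⟨ht0, htT.le⟩
  set η : ℝ := ⨆ x : K, ξ x t with hηdef
  -- a maximizer
  obtain ⟨x0, -, hx0⟩ := isCompact_univ.exists_isMaxOn Set.univ_nonempty
    ((hxc t htmem).continuousOn)
  have hη : η = ξ x0 t :=
    le_antisymm (ciSup_le fun x => hx0 (Set.mem_univ x)) (le_ciSup (hbdd t htmem) x0)
  have hle_η : ∀ x : K, ξ x t ≤ η := fun x => le_ciSup (hbdd t htmem) x
  set S : Set K := {x : K | ξ x t = ⨆ y : K, ξ y t} with hSdef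
  have hx0S : x0 ∈ S := hη.symm
  -- M and its upper bound property
  set M : ℝ := sSup ((fun x : K => ξt x t) '' S) with hMdef
  have hScompact : IsCompact S := by
    have : IsClosed S := isClosed_eq (hxc t htmem) continuous_const
    exact this.isCompact
  have hMbdd : BddAbove ((fun x : K => ξt x t) '' S) :=
    (hScompact.image hxc').bddAbove
  have hMle : ∀ x ∈ S, ξt x t ≤ M := fun x hx => le_csSup hMbdd ⟨x, hx, rfl⟩
  -- the compact set A = K × [t, t'] and bound C
  set t' : ℝ := (t + T) / 2 with ht'def
  have htt' : t < t' := by simp only [ht'def]; linarith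
  have ht'T : t' < T := by simp only [ht'def]; linarith
  have hA : IsCompact ((Set.univ : Set K) ×ˢ Set.Icc t t') :=
    isCompact_univ.prod isCompact_Icc
  have hAsub : (Set.univ : Set K) ×ˢ Set.Icc t t' ⊆ Set.univ ×ˢ Set.Ico 0 T := by
    rintro ⟨x, s⟩ ⟨-, hs1, hs2⟩
    exact ⟨trivial, le_trans ht0 hs1, lt_of_le_of_lt hs2 ht'T⟩
  have hξtA : ContinuousOn (fun p : K × ℝ => ξt p.1 p.2)
      ((Set.univ : Set K) ×ˢ Set.Icc t t') := hcont'.mono hAsub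
  obtain ⟨C0, hC0⟩ : ∃ C0, ∀ x : K, ∀ s ∈ Set.Icc t t', ξt x s ≤ C0 := by
    obtain ⟨C0, hC0⟩ := (hA.image_of_continuousOn hξtA).bddAbove
    exact ⟨C0, fun x s hs => hC0 ⟨(x, s), ⟨trivial, hs⟩, rfl⟩⟩
  -- key estimate
  have key : ∀ ε : ℝ, 0 < ε → ∀ᶠ τ in 𝓝[>] (0:ℝ),
      ((⨆ x : K, ξ x (t + τ)) - η) / τ ≤ M + ε := by
    intro ε hε
    set C : ℝ := max C0 (M + ε) with hCdef
    have hCM : M + ε ≤ C := le_max_right _ _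
    have hC0le : C0 ≤ C := le_max_left _ _
    -- the gap constant c
    set ψ : K × ℝ → ℝ := fun p => max (M + ε - ξt p.1 p.2) (max (η - ξ p.1 t) (p.2 - t))
      with hψdef
    have hψcont : ContinuousOn ψ ((Set.univ : Set K) ×ˢ Set.Icc t t') :=
      (continuousOn_const.sub hξtA).sup
        ((continuousOn_const.sub
          (Continuous.continuousOn ((hxc t htmem).comp continuous_fst))).sup
          ((continuous_snd.sub continuous_const).continuousOn))
    have hAne : ((Set.univ : Set K) ×ˢ Set.Icc t t').Nonempty :=
      ⟨(Classical.arbitrary K, t), trivial, le_refl t, htt'.le⟩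
    obtain ⟨p0, hp0A, hp0min⟩ := hA.exists_isMinOn hAne hψcont
    set c : ℝ := ψ p0 with hcdef
    have hmin : ∀ p ∈ (Set.univ : Set K) ×ˢ Set.Icc t t', c ≤ ψ p := fun p hp => hp0min hp
    have hc : 0 < c := by
      rcases lt_or_ge (ξ p0.1 t) η with h | h
      · exact lt_of_lt_of_le (sub_pos.mpr h)
          (le_trans (le_max_left _ _) (le_max_right _ _))
      · rcases eq_or_lt_of_le hp0A.2.1 with h2 | h2
        · have hmemS : p0.1 ∈ S := le_antisymm (hle_η p0.1) h
          have : ξt p0.1 p0.2 ≤ M := by rw [← h2]; exact hMle p0.1 hmemS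
          exact lt_of_lt_of_le (by linarith) (le_max_left _ _)
        · exact lt_of_lt_of_le (sub_pos.mpr h2)
            (le_trans (le_max_right _ _) (le_max_right _ _))
    have hD : (0:ℝ) < C - (M + ε) + 1 := by linarith
    set δ : ℝ := min (min c (t' - t)) (c / (C - (M + ε) + 1)) with hδdef
    have hδ0 : 0 < δ := by
      apply lt_min (lt_min hc (by linarith))
      positivity
    filter_upwards [Ioo_mem_nhdsGT hδ0] with τ hτ
    obtain ⟨hτ0, hτδ⟩ := hτ
    have hτc : τ < c := lt_of_lt_of_le hτδ (le_trans (min_le_left _ _) (min_le_left _ _))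
    have hτt' : τ < t' - t :=
      lt_of_lt_of_le hτδ (le_trans (min_le_left _ _) (min_le_right _ _))
    have hτ3 : τ * (C - (M + ε) + 1) < c := by
      have := lt_of_lt_of_le hτδ (min_le_right _ _)
      exact (lt_div_iff₀ hD).mp this
    have hsub2 : Set.Icc t (t + τ) ⊆ Set.Icc (0:ℝ) T :=
      Set.Icc_subset_Icc ht0 (by linarith)
    have hpt : ∀ x : K, ξ x (t + τ) ≤ η + (M + ε) * τ := by
      intro x
      have hderall : ∀ s ∈ Set.Icc t (t + τ),
          HasDerivWithinAt (ξ x) (ξt x s) (Set.Icc t (t + τ)) s := by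
        intro s hs
        exact (hder x s ⟨le_trans ht0 hs.1, by linarith [hs.2]⟩).mono hsub2
      by_cases hcase : ∀ s ∈ Set.Ioo t (t + τ), ξt x s < M + ε
      · have := mvt_aux (by linarith : t ≤ t + τ) hderall
          (fun s hs => (hcase s hs).le)
        have h2 : ξ x (t + τ) - ξ x t ≤ (M + ε) * τ := by
          simpa using this
        linarith [hle_η x]
      · push_neg at hcase
        obtain ⟨s, hs, hsge⟩ := hcase
        have hsA : (x, s) ∈ (Set.univ : Set K) ×ˢ Set.Icc t t' :=
          ⟨trivial, hs.1.le, by linarith [hs.2]⟩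
        have hψs : c ≤ ψ (x, s) := hmin _ hsA
        have h1 : M + ε - ξt x s ≤ 0 := by linarith
        have hst : s - t < c := by linarith [hs.2]
        have hgap : c ≤ η - ξ x t := by
          rcases le_max_iff.mp hψs with h | h
          · linarith
          · rcases le_max_iff.mp h with h | h
            · exact h
            · linarith
        have hmv := mvt_aux (by linarith : t ≤ t + τ) hderall
          (fun s' hs' => le_trans
            (hC0 x s' ⟨hs'.1.le, by linarith [hs'.2]⟩) hC0le)
        have h2 : ξ x (t + τ) - ξ x t ≤ C * τ := by simpa using hmv
        nlinarith [hτ3, hτ0]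
    have hsup : (⨆ x : K, ξ x (t + τ)) ≤ η + (M + ε) * τ := ciSup_le hpt
    rw [div_le_iff₀ hτ0]
    linarith
  -- coboundedness from below
  have hcob : Filter.IsCoboundedUnder (· ≤ ·) (𝓝[>] (0:ℝ))
      (fun τ : ℝ => ((⨆ x : K, ξ x (t + τ)) - η) / τ) := by
    apply Filter.IsCoboundedUnder.of_frequently_ge (a := ξt x0 t - 1)
    apply Filter.Eventually.frequently
    have hmap : Filter.Tendsto (fun τ : ℝ => t + τ) (𝓝[>] (0:ℝ))
        (𝓝[Set.Icc 0 T \ {t}] t) := by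
      apply tendsto_nhdsWithin_of_tendsto_nhds_of_eventually_within
      · exact ((continuous_const.add continuous_id).tendsto' 0 t (by simp)).mono_left
          nhdsWithin_le_nhds
      · filter_upwards [Ioo_mem_nhdsGT (by linarith : (0:ℝ) < T - t)]
          with τ hτ
        exact ⟨⟨by linarith [hτ.1], by linarith [hτ.2]⟩, by
          simp only [Set.mem_singleton_iff]; intro h; linarith [hτ.1]⟩
    have hslope := (hasDerivWithinAt_iff_tendsto_slope.mp
      (hder x0 t ⟨ht0, htT⟩)).comp hmap
    have heq : (slope (ξ x0) t ∘ fun τ : ℝ => t + τ)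
        = fun τ : ℝ => (ξ x0 (t + τ) - ξ x0 t) / τ := by
      funext τ
      simp [Function.comp, slope_def_field, add_sub_cancel_left]
    rw [heq] at hslope
    have hslope' : Filter.Tendsto (fun τ : ℝ => (ξ x0 (t + τ) - ξ x0 t) / τ)
        (𝓝[>] (0:ℝ)) (𝓝 (ξt x0 t)) := hslope
    have hev1 : ∀ᶠ τ in 𝓝[>] (0:ℝ),
        ξt x0 t - 1 ≤ (ξ x0 (t + τ) - ξ x0 t) / τ :=
      hslope'.eventually (eventually_ge_nhds (by linarith))
    filter_upwards [hev1, Ioo_mem_nhdsGT (by linarith : (0:ℝ) < T - t)]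
      with τ h1 h2
    have hmem : t + τ ∈ Set.Icc (0:ℝ) T := ⟨by linarith [h2.1], by linarith [h2.2]⟩
    have h3 : ξ x0 (t + τ) ≤ ⨆ x : K, ξ x (t + τ) := le_ciSup (hbdd _ hmem) x0
    have h4 : (ξ x0 (t + τ) - ξ x0 t) / τ ≤ ((⨆ x : K, ξ x (t + τ)) - η) / τ := by
      apply (div_le_div_iff_of_pos_right h2.1).mpr
      rw [hη]
      linarith
    exact le_trans h1 h4
  have hfinal : Filter.limsup
      (fun τ : ℝ => ((⨆ x : K, ξ x (t + τ)) - η) / τ) (𝓝[>] (0:ℝ)) ≤ M := by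
    apply le_of_forall_pos_le_add
    intro ε hε
    exact Filter.limsup_le_of_le hcob (key ε hε)
  exact hfinal
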